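/- Let G ∈ ℝ^{p×p} be symmetric positive semidefinite and g ∈ range(G). Suppose g = Φ^T g' and G = Φ^T G' Φ for an invertible matrix Φ ∈ ℝ^{p×p}, with g' ∈ range(G'). Then g^T G^† g = g'^T G'^† g'. -/

import Mathlib

open Matrix

/-- `B` satisfies the four Penrose conditions for being the Moore–Penrose
pseudoinverse of `A`. -/
def IsMoorePenroseInv {p : ℕ} (A B : Matrix (Fin p) (Fin p) ℝ) : Prop :=
  A * B * A = A ∧ B * A * B = B ∧ (A * B)ᵀ = A * B ∧ (B * A)ᵀ = B * A

/-!
For `g = G w` and any generalized inverse `B` of a symmetric `G` (`G B G = G`), the form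
`gᵀ B g = wᵀ G B G w` collapses to `wᵀ G w`, so it does not depend on the choice of `B`.
Under the congruence, invertibility of `Φᵀ` forces `g' = G' (Φ w)`, and then
`g'ᵀ G'† g' = (Φ w)ᵀ G' (Φ w) = wᵀ G w`.
-/

namespace Matrix

variable {m n R : Type*} [Fintype m] [Fintype n] [CommSemiring R]

theorem dotProduct_transpose_mul_mul_mulVec (Φ : Matrix m n R) (A : Matrix m m R)
    (w : n → R) : w ⬝ᵥ ((Φᵀ * A * Φ) *ᵥ w) = (Φ *ᵥ w) ⬝ᵥ (A *ᵥ (Φ *ᵥ w)) := by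
  rw [← mulVec_mulVec, ← mulVec_mulVec, dotProduct_mulVec, vecMul_transpose]

theorem IsSymm.mulVec_dotProduct_mulVec_mulVec_of_mul_mul_self {G B : Matrix n n R}
    (hG : G.IsSymm) (hB : G * B * G = G) (w : n → R) :
    (G *ᵥ w) ⬝ᵥ (B *ᵥ (G *ᵥ w)) = w ⬝ᵥ (G *ᵥ w) := by
  rw [← dotProduct_transpose_mul_mul_mulVec, hG.eq, hB]

end Matrix

theorem pseudoinverse_quadform_congruence_invariant_general (p : ℕ)
    (G G' : Matrix (Fin p) (Fin p) ℝ)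
    (hG : G.PosSemidef) (hG' : G'.PosSemidef)
    (g g' : Fin p → ℝ)
    (hg : ∃ w, g = G *ᵥ w)
    (Φ : Matrix (Fin p) (Fin p) ℝ) (hΦ : IsUnit Φ.det)
    (hcong : G = Φᵀ * G' * Φ) (hgcong : g = Φᵀ *ᵥ g') :
    ∀ Gdag Gdag' : Matrix (Fin p) (Fin p) ℝ,
      IsMoorePenroseInv G Gdag → IsMoorePenroseInv G' Gdag' →
        g ⬝ᵥ (Gdag *ᵥ g) = g' ⬝ᵥ (Gdag' *ᵥ g') := by
  rintro Gdag Gdag' ⟨hGdag, -⟩ ⟨hGdag', -⟩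
  obtain ⟨w, rfl⟩ := hg
  have hg' : g' = G' *ᵥ (Φ *ᵥ w) := by
    have hΦT : IsUnit Φᵀ := (isUnit_iff_isUnit_det _).2 (by rwa [det_transpose])
    refine mulVec_injective_iff_isUnit.2 hΦT ?_
    rw [← hgcong, mulVec_mulVec, mulVec_mulVec, ← hcong]
  have hGsymm : G.IsSymm := isHermitian_iff_isSymm.1 hG.isHermitian
  have hG'symm : G'.IsSymm := isHermitian_iff_isSymm.1 hG'.isHermitian
  rw [hGsymm.mulVec_dotProduct_mulVec_mulVec_of_mul_mul_self hGdag, hg',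
    hG'symm.mulVec_dotProduct_mulVec_mulVec_of_mul_mul_self hGdag', hcong,
    dotProduct_transpose_mul_mul_mulVec]

/-- Invariance of the pseudoinverse quadratic form `gᵀ G† g` under congruence
`G = Φᵀ G' Φ`, `g = Φᵀ g'` by an invertible `Φ`, when `g ∈ range G` and
`g' ∈ range G'`. -/
theorem pseudoinverse_quadform_congruence_invariant (p : ℕ)
    (G G' : Matrix (Fin p) (Fin p) ℝ)
    (hG : G.PosSemidef) (hG' : G'.PosSemidef)
    (g g' : Fin p → ℝ)
    (hg : ∃ w, g = G *ᵥ w) (hg' : ∃ w', g' = G' *ᵥ w')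
    (Φ : Matrix (Fin p) (Fin p) ℝ) (hΦ : IsUnit Φ.det)
    (hcong : G = Φᵀ * G' * Φ) (hgcong : g = Φᵀ *ᵥ g') :
    ∀ Gdag Gdag' : Matrix (Fin p) (Fin p) ℝ,
      IsMoorePenroseInv G Gdag → IsMoorePenroseInv G' Gdag' →
        g ⬝ᵥ (Gdag *ᵥ g) = g' ⬝ᵥ (Gdag' *ᵥ g') :=
  pseudoinverse_quadform_congruence_invariant_general p G G' hG hG' g g' hg Φ hΦ hcong hgcong
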